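/- arXiv:1902.10413 — 2 statements merged into one kernel-verified Lean document; each statement's English description precedes it below -/
import Mathlib

section
/- Let ρ̄ > 0 and let h : [0,ρ̄] → ℝ be continuous on [0,ρ̄] and continuously differentiable on (0,ρ̄), with h(ρ) ≥ h₀ > 0 for all ρ and h′(ρ) ≥ 0 on (0,ρ̄). Then for all a, b ∈ [0,ρ̄] and all θ ≥ 0, the pressure p(ρ,θ) = ρ θ h(ρ) satisfies the monotonicity estimate (p(a,θ) − p(b,θ))(a − b) = θ (a h(a) − b h(b))(a − b) ≥ (h₀/(2ρ̄)) θ |a − b|³. -/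
open Set

/-
Since `(ρ h(ρ))' = h(ρ) + ρ h'(ρ) ≥ h₀`, the map `ρ ↦ ρ h(ρ) - h₀ ρ` is monotone on `[0, ρ̄]`.
Hence `(a h(a) - b h(b))(a - b) ≥ h₀ (a - b)²`, and `|a - b| ≤ 2 ρ̄` turns this into the cubic bound.
-/

theorem mul_sq_le_of_monotoneOn_sub_const_mul {f : ℝ → ℝ} {D : Set ℝ} {m : ℝ}
    (hf : MonotoneOn (fun x => f x - m * x) D) {a b : ℝ} (ha : a ∈ D) (hb : b ∈ D) :
    m * (a - b) ^ 2 ≤ (f a - f b) * (a - b) := by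
  rcases le_total b a with hba | hab
  · have := hf hb ha hba
    nlinarith [sub_nonneg.mpr hba]
  · have := hf ha hb hab
    nlinarith [sub_nonneg.mpr hab]

theorem monotoneOn_mul_self_sub_const_mul {h h' : ℝ → ℝ} {D : Set ℝ} {m : ℝ}
    (hD : Convex ℝ D) (hcont : ContinuousOn h D)
    (hderiv : ∀ x ∈ interior D, HasDerivAt h (h' x) x)
    (hnonneg : ∀ x ∈ interior D, 0 ≤ x) (hlow : ∀ x ∈ interior D, m ≤ h x)
    (hmono : ∀ x ∈ interior D, 0 ≤ h' x) :
    MonotoneOn (fun x => x * h x - m * x) D := by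
  have hasDeriv : ∀ x ∈ interior D,
      HasDerivAt (fun x => x * h x - m * x) (h x + x * h' x - m) x := fun x hx =>
    (((hasDerivAt_id' x).mul (hderiv x hx)).sub ((hasDerivAt_id' x).const_mul m)).congr_deriv
      (by ring)
  refine monotoneOn_of_deriv_nonneg hD
    ((continuousOn_id.mul hcont).sub (continuousOn_const.mul continuousOn_id))
    (fun x hx => (hasDeriv x hx).differentiableAt.differentiableWithinAt) fun x hx => ?_
  rw [(hasDeriv x hx).deriv]
  nlinarith [hlow x hx, mul_nonneg (hnonneg x hx) (hmono x hx)]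

theorem div_mul_abs_pow_three_le {r c a b : ℝ} (hc : 0 ≤ c) (ha : a ∈ Icc 0 r) (hb : b ∈ Icc 0 r) :
    c / (2 * r) * |a - b| ^ 3 ≤ c * (a - b) ^ 2 := by
  have hdist : |a - b| ≤ 2 * r := by
    rw [abs_le]
    constructor <;> linarith [ha.1, ha.2, hb.1, hb.2]
  have hratio : |a - b| / (2 * r) ≤ 1 := div_le_one_of_le₀ hdist (by linarith [ha.1, ha.2])
  calc c / (2 * r) * |a - b| ^ 3 = c * (a - b) ^ 2 * (|a - b| / (2 * r)) := by
        rw [← sq_abs (a - b)]; ring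
    _ ≤ c * (a - b) ^ 2 * 1 := by gcongr
    _ = c * (a - b) ^ 2 := mul_one _

theorem pressure_monotonicity_general
    (ρbar h₀ : ℝ) (hh₀ : 0 < h₀)
    (h h' : ℝ → ℝ)
    (hcont : ContinuousOn h (Icc 0 ρbar))
    (hderiv : ∀ x ∈ Ioo 0 ρbar, HasDerivAt h (h' x) x)
    (hlow : ∀ ρ ∈ Icc 0 ρbar, h₀ ≤ h ρ)
    (hmono : ∀ x ∈ Ioo 0 ρbar, 0 ≤ h' x) :
    ∀ a ∈ Icc 0 ρbar, ∀ b ∈ Icc 0 ρbar, ∀ θ : ℝ, 0 ≤ θ →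
      (a * θ * h a - b * θ * h b) * (a - b) = θ * (a * h a - b * h b) * (a - b) ∧
      θ * (a * h a - b * h b) * (a - b) ≥ (h₀ / (2 * ρbar)) * θ * |a - b| ^ 3 := by
  have hshift : MonotoneOn (fun x => x * h x - h₀ * x) (Icc 0 ρbar) := by
    refine monotoneOn_mul_self_sub_const_mul (h' := h') (convex_Icc 0 ρbar) hcont ?_ ?_ ?_ ?_ <;>
      rw [interior_Icc]
    exacts [hderiv, fun x hx => hx.1.le, fun x hx => hlow x (Ioo_subset_Icc_self hx), hmono]
  intro a ha b hb θ hθ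
  refine ⟨by ring, ?_⟩
  have hquad := mul_sq_le_of_monotoneOn_sub_const_mul hshift ha hb
  have hcube := div_mul_abs_pow_three_le hh₀.le ha hb
  calc h₀ / (2 * ρbar) * θ * |a - b| ^ 3 = θ * (h₀ / (2 * ρbar) * |a - b| ^ 3) := by ring
    _ ≤ θ * ((a * h a - b * h b) * (a - b)) := mul_le_mul_of_nonneg_left (hcube.trans hquad) hθ
    _ = θ * (a * h a - b * h b) * (a - b) := by ring

/-- Quantitative monotonicity of the pressure `p(ρ,θ) = ρ θ h(ρ)`
in the density variable. -/
theorem pressure_monotonicity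
    (ρbar h₀ : ℝ) (hρbar : 0 < ρbar) (hh₀ : 0 < h₀)
    (h h' : ℝ → ℝ)
    (hcont : ContinuousOn h (Icc 0 ρbar))
    (hderiv : ∀ x ∈ Ioo 0 ρbar, HasDerivAt h (h' x) x)
    (hderivcont : ContinuousOn h' (Ioo 0 ρbar))
    (hlow : ∀ ρ ∈ Icc 0 ρbar, h₀ ≤ h ρ)
    (hmono : ∀ x ∈ Ioo 0 ρbar, 0 ≤ h' x) :
    ∀ a ∈ Icc 0 ρbar, ∀ b ∈ Icc 0 ρbar, ∀ θ : ℝ, 0 ≤ θ →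
      (a * θ * h a - b * θ * h b) * (a - b) = θ * (a * h a - b * h b) * (a - b) ∧
      θ * (a * h a - b * h b) * (a - b) ≥ (h₀ / (2 * ρbar)) * θ * |a - b| ^ 3 :=
  pressure_monotonicity_general ρbar h₀ hh₀ h h' hcont hderiv hlow hmono
end

section
/- Let Ω ⊂ ℝ² be open, ε > 0, ρ_M > 0, G : Ω → ℝ, c_v > 0, and let h be continuously differentiable and positive. Let μ_δ, λ_δ, κ_δ be continuously differentiable positive functions of the temperature, and set S_δ(θ,∇u) = μ_δ(θ)[∇u + (∇u)ᵀ − (div u)I] + λ_δ(θ)(div u)I, q_δ(θ,∇θ) = −κ_δ(θ)∇θ, p(ρ,θ) = ρθh(ρ), e(ρ,θ) = c_vθ, and s(ρ,θ) = c_v log θ − ∫_{ρ_M}^{ρ} h(z)/z dz. Suppose (ρ, u, θ) are smooth on Ω with ρ > 0 and θ > 0, and satisfy the regularized continuity equation div(ρu) = εΔρ − ε(ρ − ρ_M) and the internal energy equation div(ρ e(ρ,θ) u) + div q_δ(θ,∇θ) = S_δ(θ,∇u):∇u − p(ρ,θ) div u + ρ(G + ε). Then the following entropy production identity holds pointwise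 in Ω: (1/θ)[S_δ(θ,∇u):∇u + (κ_δ(θ)/θ)|∇θ|²] + (ρ/θ)(G + ε) = div(q_δ(θ,∇θ)/θ) + div(ρ s(ρ,θ) u) + ε(Δρ − (ρ − ρ_M))·(e(ρ,θ)/θ − s(ρ,θ) + p(ρ,θ)/(ρθ)). -/
open MeasureTheory Real

noncomputable section

/-- The divergence of a vector field on the plane (defined via `fderiv`). -/
def divg (u : EuclideanSpace ℝ (Fin 2) → EuclideanSpace ℝ (Fin 2))
    (x : EuclideanSpace ℝ (Fin 2)) : ℝ :=
  ∑ i, fderiv ℝ u x (EuclideanSpace.single i 1) i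

/-- The velocity gradient matrix `(∇u)_{ij} = ∂_i u_j`. -/
def gradMat (u : EuclideanSpace ℝ (Fin 2) → EuclideanSpace ℝ (Fin 2))
    (x : EuclideanSpace ℝ (Fin 2)) : Matrix (Fin 2) (Fin 2) ℝ :=
  fun i j => fderiv ℝ u x (EuclideanSpace.single i 1) j

/-- Frobenius inner product of two `2×2` matrices. -/
def frob (A B : Matrix (Fin 2) (Fin 2) ℝ) : ℝ := ∑ i, ∑ j, A i j * B i j

/-- The Laplacian of a scalar field on the plane. -/
def lap (f : EuclideanSpace ℝ (Fin 2) → ℝ) (x : EuclideanSpace ℝ (Fin 2)) : ℝ :=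
  divg (fun y => gradient f y) x

/-- The Newtonian viscous stress tensor
`S_δ(θ,∇u) = μ_δ(θ)[∇u + (∇u)ᵀ − (div u) I] + λ_δ(θ)(div u) I`. -/
def stressTensor (μδ lamδ : ℝ → ℝ) (θ : EuclideanSpace ℝ (Fin 2) → ℝ)
    (u : EuclideanSpace ℝ (Fin 2) → EuclideanSpace ℝ (Fin 2))
    (x : EuclideanSpace ℝ (Fin 2)) : Matrix (Fin 2) (Fin 2) ℝ :=
  μδ (θ x) • (gradMat u x + (gradMat u x).transpose - divg u x • (1 : Matrix (Fin 2) (Fin 2) ℝ))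
    + (lamδ (θ x) * divg u x) • (1 : Matrix (Fin 2) (Fin 2) ℝ)


section Helpers

local notation "E2s" => EuclideanSpace ℝ (Fin 2)

theorem divg_smul_aux (f : E2s → ℝ) (u : E2s → E2s) (x : E2s)
    (hf : DifferentiableAt ℝ f x) (hu : DifferentiableAt ℝ u x) :
    divg (fun y => f y • u y) x
      = (∑ i, fderiv ℝ f x (EuclideanSpace.single i 1) * u x i) + f x * divg u x := by
  unfold divg
  rw [fderiv_fun_smul hf hu]
  simp only [ContinuousLinearMap.add_apply, ContinuousLinearMap.coe_smul', Pi.smul_apply,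
    ContinuousLinearMap.smulRight_apply, PiLp.add_apply, PiLp.smul_apply, smul_eq_mul]
  rw [Finset.sum_add_distrib, Finset.mul_sum]
  ring

theorem divg_smul_aux' (f : E2s → ℝ) (L : E2s →L[ℝ] ℝ) (u : E2s → E2s) (x : E2s)
    (hf : HasFDerivAt f L x) (hu : DifferentiableAt ℝ u x) :
    divg (fun y => f y • u y) x
      = (∑ i, L (EuclideanSpace.single i 1) * u x i) + f x * divg u x := by
  rw [divg_smul_aux f u x hf.differentiableAt hu, hf.fderiv]

theorem gradient_coord_aux (f : E2s → ℝ) (x : E2s) (i : Fin 2) :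
    gradient f x i = fderiv ℝ f x (EuclideanSpace.single i 1) := by
  have : gradient f x i = (inner ℝ (gradient f x) (EuclideanSpace.single i (1:ℝ)) : ℝ) := by
    rw [EuclideanSpace.inner_single_right]; simp
  rw [this, gradient, InnerProductSpace.toDual_symm_apply]

theorem norm_grad_sq_aux (f : E2s → ℝ) (x : E2s) :
    ‖gradient f x‖ ^ 2 = ∑ i, (fderiv ℝ f x (EuclideanSpace.single i 1))^2 := by
  rw [← real_inner_self_eq_norm_sq, PiLp.inner_apply]
  refine Finset.sum_congr rfl fun i _ => ?_
  rw [RCLike.inner_apply, conj_trivial, ← gradient_coord_aux, sq]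

end Helpers

set_option maxHeartbeats 2000000 in

/-- Pointwise entropy production identity for smooth solutions of the
regularized continuity equation and internal energy equation of the approximate
Navier–Stokes–Fourier system. -/
theorem entropy_identity
    (Ω : Set (EuclideanSpace ℝ (Fin 2))) (hΩ : IsOpen Ω)
    (ε ρM cv : ℝ) (hε : 0 < ε) (hρM : 0 < ρM) (hcv : 0 < cv)
    (G : EuclideanSpace ℝ (Fin 2) → ℝ)
    (h : ℝ → ℝ) (hh : ContDiff ℝ 1 h) (hhpos : ∀ z, 0 < h z)
    (μδ lamδ κδ : ℝ → ℝ)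
    (hμ : ContDiff ℝ 1 μδ) (hlam : ContDiff ℝ 1 lamδ) (hκ : ContDiff ℝ 1 κδ)
    (hμpos : ∀ t, 0 < μδ t) (hlampos : ∀ t, 0 < lamδ t) (hκpos : ∀ t, 0 < κδ t)
    (ρ θ : EuclideanSpace ℝ (Fin 2) → ℝ)
    (u : EuclideanSpace ℝ (Fin 2) → EuclideanSpace ℝ (Fin 2))
    (hρ : ContDiffOn ℝ (⊤ : ℕ∞) ρ Ω) (hθ : ContDiffOn ℝ (⊤ : ℕ∞) θ Ω) (hu : ContDiffOn ℝ (⊤ : ℕ∞) u Ω)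
    (hρpos : ∀ x ∈ Ω, 0 < ρ x) (hθpos : ∀ x ∈ Ω, 0 < θ x)
    -- regularized continuity equation div(ρu) = εΔρ − ε(ρ − ρ_M):
    (hcont : ∀ x ∈ Ω, divg (fun y => ρ y • u y) x = ε * lap ρ x - ε * (ρ x - ρM))
    -- internal energy equation div(ρ e u) + div q_δ = S_δ:∇u − p div u + ρ(G + ε):
    (henergy : ∀ x ∈ Ω,
      divg (fun y => (ρ y * (cv * θ y)) • u y) x
          + divg (fun y => (-(κδ (θ y))) • gradient θ y) x
        = frob (stressTensor μδ lamδ θ u x) (gradMat u x)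
            - (ρ x * θ x * h (ρ x)) * divg u x + ρ x * (G x + ε)) :
    -- entropy production identity:
    ∀ x ∈ Ω,
      (1 / θ x) * (frob (stressTensor μδ lamδ θ u x) (gradMat u x)
          + (κδ (θ x) / θ x) * ‖gradient θ x‖ ^ 2)
        + (ρ x / θ x) * (G x + ε)
      = divg (fun y => (θ y)⁻¹ • ((-(κδ (θ y))) • gradient θ y)) x
          + divg (fun y =>
              (ρ y * (cv * Real.log (θ y) - ∫ z in ρM..(ρ y), h z / z)) • u y) x
          + ε * (lap ρ x - (ρ x - ρM)) *
            ((cv * θ x) / θ x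
              - (cv * Real.log (θ x) - ∫ z in ρM..(ρ x), h z / z)
              + (ρ x * θ x * h (ρ x)) / (ρ x * θ x)) := by
  intro x hx
  have hmem := hΩ.mem_nhds hx
  have hθ0 : 0 < θ x := hθpos x hx
  have hρ0 : 0 < ρ x := hρpos x hx
  have hθd : DifferentiableAt ℝ θ x := (hθ.contDiffAt hmem).differentiableAt (by simp)
  have hρd : DifferentiableAt ℝ ρ x := (hρ.contDiffAt hmem).differentiableAt (by simp)
  have hud : DifferentiableAt ℝ u x := (hu.contDiffAt hmem).differentiableAt (by simp)
  set Lθ : EuclideanSpace ℝ (Fin 2) →L[ℝ] ℝ := fderiv ℝ θ x with hLθ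
  set Lρ : EuclideanSpace ℝ (Fin 2) →L[ℝ] ℝ := fderiv ℝ ρ x with hLρ
  have Hθ : HasFDerivAt θ Lθ x := hθd.hasFDerivAt
  have Hρ : HasFDerivAt ρ Lρ x := hρd.hasFDerivAt
  have hgradd : DifferentiableAt ℝ (fun y => gradient θ y) x := by
    have h2 : ContDiffAt ℝ (⊤ : ℕ∞) (fderiv ℝ θ) x := (hθ.contDiffAt hmem).fderiv_right (by simp)
    have h3 : DifferentiableAt ℝ (fderiv ℝ θ) x := h2.differentiableAt (by simp)
    exact ((InnerProductSpace.toDual ℝ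
      (EuclideanSpace ℝ (Fin 2))).symm.toContinuousLinearEquiv.differentiableAt).comp x h3
  have Hκ : HasDerivAt κδ (deriv κδ (θ x)) (θ x) := ((hκ.differentiable one_ne_zero) (θ x)).hasDerivAt
  have HF : HasDerivAt (fun r => ∫ z in ρM..r, h z / z) (h (ρ x) / ρ x) (ρ x) := by
    have hcontF : ContinuousOn (fun z => h z / z) {z : ℝ | z ≠ 0} :=
      (hh.continuous.continuousOn).div continuousOn_id (fun z hz => hz)
    have hint : IntervalIntegrable (fun z => h z / z) volume ρM (ρ x) := by
      apply ContinuousOn.intervalIntegrable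
      apply hcontF.mono
      intro z hz
      rcases Set.mem_uIcc.1 hz with h1 | h1 <;> intro h0 <;> nlinarith [h1.1, h1.2]
    exact intervalIntegral.integral_hasDerivAt_right hint
      (hcontF.stronglyMeasurableAtFilter (isOpen_ne_fun continuous_id continuous_const) _ hρ0.ne')
      (hcontF.continuousAt ((isOpen_ne_fun continuous_id continuous_const).mem_nhds hρ0.ne'))
  have H2 : HasFDerivAt (fun y => ρ y * (cv * θ y)) (ρ x • (cv • Lθ) + (cv * θ x) • Lρ) x :=
    Hρ.mul (Hθ.const_mul cv)
  have H3 : HasFDerivAt (fun y => -(κδ (θ y))) ((-(deriv κδ (θ x))) • Lθ) x :=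
    (Hκ.neg).comp_hasFDerivAt x Hθ
  have H4 : HasFDerivAt (fun y => (θ y)⁻¹ * (-(κδ (θ y))))
      ((-(θ x ^ 2)⁻¹ * (-(κδ (θ x))) + (θ x)⁻¹ * (-(deriv κδ (θ x)))) • Lθ) x :=
    (((hasDerivAt_inv hθ0.ne').mul Hκ.neg)).comp_hasFDerivAt x Hθ
  have Hs : HasFDerivAt (fun y => cv * Real.log (θ y) - ∫ z in ρM..(ρ y), h z / z)
      ((cv * (θ x)⁻¹) • Lθ - (h (ρ x) / ρ x) • Lρ) x :=
    HasFDerivAt.sub (((Real.hasDerivAt_log hθ0.ne').const_mul cv).comp_hasFDerivAt x Hθ)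
      (HF.comp_hasFDerivAt x Hρ)
  have H5 : HasFDerivAt (fun y => ρ y * (cv * Real.log (θ y) - ∫ z in ρM..(ρ y), h z / z))
      (ρ x • ((cv * (θ x)⁻¹) • Lθ - (h (ρ x) / ρ x) • Lρ)
        + (cv * Real.log (θ x) - ∫ z in ρM..(ρ x), h z / z) • Lρ) x := Hρ.mul Hs
  have hq : (fun y => (θ y)⁻¹ • ((-(κδ (θ y))) • gradient θ y))
      = (fun y => ((θ y)⁻¹ * (-(κδ (θ y)))) • gradient θ y) := by
    funext y; rw [smul_smul]
  have E1 := hcont x hx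
  rw [divg_smul_aux' ρ Lρ u x Hρ hud] at E1
  have E2 := henergy x hx
  rw [divg_smul_aux' _ _ u x H2 hud, divg_smul_aux' _ _ _ x H3 hgradd] at E2
  rw [hq, divg_smul_aux' _ _ _ x H4 hgradd, divg_smul_aux' _ _ u x H5 hud, norm_grad_sq_aux]
  simp only [ContinuousLinearMap.add_apply, ContinuousLinearMap.sub_apply,
    ContinuousLinearMap.coe_smul', Pi.smul_apply, smul_eq_mul, gradient_coord_aux,
    Fin.sum_univ_two] at E1 E2 ⊢
  set b0 := Lθ (EuclideanSpace.single 0 1)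
  set b1 := Lθ (EuclideanSpace.single 1 1)
  set a0 := Lρ (EuclideanSpace.single 0 1)
  set a1 := Lρ (EuclideanSpace.single 1 1)
  have h1 : θ x * (θ x)⁻¹ = 1 := mul_inv_cancel₀ hθ0.ne'
  have h2 : ρ x * (ρ x)⁻¹ = 1 := mul_inv_cancel₀ hρ0.ne'
  linear_combination (-(θ x)⁻¹) * E2
    + (cv + h (ρ x) - (cv * Real.log (θ x) - ∫ z in ρM..ρ x, h z / z)) * E1
    + (cv * (a0 * u x 0 + a1 * u x 1)
        + (cv + h (ρ x)) * (ρ x * divg u x)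
        - (cv + h (ρ x)) * (ε * (lap ρ x - (ρ x - ρM)))) * h1
    + (h (ρ x) * (a0 * u x 0 + a1 * u x 1)
        - h (ρ x) * (ε * (lap ρ x - (ρ x - ρM))) * (θ x * (θ x)⁻¹)) * h2

end
end
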